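/- Let p : ℂ → ℂ be a polynomial of degree n ≥ 1 and let b > 0 be a real number. Then ∫_ℂ 2b²·|p'(u)|² / (b² + |p(u)|²)² dλ(u) = 2πn, where λ is Lebesgue measure on ℂ. -/

import Mathlib

/-!
Off the finitely many critical values of `p`, every fibre of `p` has exactly `n` points and `p` is
a local diffeomorphism with real Jacobian `|p'|²`. The area formula therefore turns the integral
into `n` times `∫_ℂ 2b²/(b² + |w|²)² dλ(w)`, which in polar coordinates is
`2π ∫₀^∞ 2b²r/(b² + r²)² dr = 2π`.
-/

open MeasureTheory Real Set Polynomial Filter Topology Function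
open scoped ENNReal

lemma Set.encard_iUnion_eq_tsum {ι α : Type*} {t : ι → Set α}
    (ht : Pairwise (Disjoint on t)) :
    ((⋃ i, t i).encard : ℝ≥0∞) = ∑' i, ((t i).encard : ℝ≥0∞) := by
  simp_rw [← ENNReal.tsum_set_one]
  exact ENNReal.tsum_biUnion (f := fun _ => 1) fun i _ j _ hij => ht hij

lemma Set.InjOn.encard_inter_preimage_singleton {α β : Type*} {f : α → β} {s : Set α}
    (hf : InjOn f s) (y : β) :
    ((s ∩ f ⁻¹' {y}).encard : ℝ≥0∞) = (f '' s).indicator 1 y := by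
  by_cases hy : y ∈ f '' s
  · obtain ⟨x, hx, rfl⟩ := hy
    have : s ∩ f ⁻¹' {f x} = {x} :=
      eq_singleton_iff_unique_mem.2 ⟨⟨hx, rfl⟩, fun x' hx' => hf hx'.1 hx hx'.2⟩
    simp [this, indicator_of_mem (mem_image_of_mem f hx)]
  · have : s ∩ f ⁻¹' {y} = ∅ := by
      ext x
      simp only [mem_inter_iff, mem_preimage, mem_singleton_iff, mem_empty_iff_false, iff_false]
      rintro ⟨hx, rfl⟩
      exact hy (mem_image_of_mem f hx)
    simp [this, indicator_of_notMem hy]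

lemma exists_measurable_partition_injOn {X Y : Type*} [TopologicalSpace X]
    [SecondCountableTopology X] [MeasurableSpace X] [OpensMeasurableSpace X] {f : X → Y}
    {s : Set X} (hs : MeasurableSet s) (hinj : ∀ x ∈ s, ∃ t ∈ 𝓝 x, InjOn f t) :
    ∃ S : ℕ → Set X, (∀ k, MeasurableSet (S k)) ∧ Pairwise (Disjoint on S) ∧
      ⋃ k, S k = s ∧ ∀ k, InjOn f (S k) := by
  rcases s.eq_empty_or_nonempty with rfl | hne
  · exact ⟨fun _ => ∅, fun _ => .empty, fun _ _ _ => disjoint_bot_left, iUnion_empty,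
      fun _ => injOn_empty f⟩
  choose! t ht hft using hinj
  obtain ⟨T, hTs, hTc, hsT⟩ := TopologicalSpace.countable_cover_nhdsWithin
    (f := fun x => interior (t x)) fun x hx =>
      mem_nhdsWithin_of_mem_nhds (interior_mem_nhds.2 (ht x hx))
  have hTne : T.Nonempty := by
    obtain ⟨x, hx⟩ := hne
    obtain ⟨y, hy, -⟩ := mem_iUnion₂.1 (hsT hx)
    exact ⟨y, hy⟩
  obtain ⟨e, rfl⟩ := hTc.exists_eq_range hTne
  set W : ℕ → Set X := fun k => interior (t (e k)) ∩ s
  have hWs : ⋃ k, W k = s := by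
    refine subset_antisymm (iUnion_subset fun k => inter_subset_right) fun x hx => ?_
    obtain ⟨_, ⟨k, rfl⟩, hk⟩ := mem_iUnion₂.1 (hsT hx)
    exact mem_iUnion.2 ⟨k, hk, hx⟩
  refine ⟨disjointed W, .disjointed fun k => isOpen_interior.measurableSet.inter hs,
    disjoint_disjointed W, by rw [iUnion_disjointed, hWs], fun k => ?_⟩
  exact (hft _ (hTs ⟨k, rfl⟩)).mono ((disjointed_subset W k).trans
    (inter_subset_left.trans interior_subset))

section AreaFormula

variable {E : Type*} [NormedAddCommGroup E] [NormedSpace ℝ E] [FiniteDimensional ℝ E]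
  [MeasurableSpace E] [BorelSpace E] (μ : Measure E) [μ.IsAddHaarMeasure]

theorem lintegral_abs_det_fderiv_mul_eq_lintegral_encard_mul {f : E → E}
    {f' : E → E →L[ℝ] E} {s : Set E} (hs : MeasurableSet s)
    (hf' : ∀ x ∈ s, HasFDerivWithinAt f (f' x) s x)
    (hinj : ∀ x ∈ s, ∃ t ∈ 𝓝 x, InjOn f t) {g : E → ℝ≥0∞} (hg : Measurable g) :
    ∫⁻ x in s, ENNReal.ofReal |(f' x).det| * g (f x) ∂μ =
      ∫⁻ y, (s ∩ f ⁻¹' {y}).encard * g y ∂μ := by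
  obtain ⟨S, hSm, hSd, rfl, hSinj⟩ := exists_measurable_partition_injOn hs hinj
  have hSf' k : ∀ x ∈ S k, HasFDerivWithinAt f (f' x) (S k) x := fun x hx =>
    (hf' x (mem_iUnion_of_mem k hx)).mono (subset_iUnion S k)
  have hcount y :
      ∑' k, (f '' S k).indicator g y = ((⋃ k, S k) ∩ f ⁻¹' {y}).encard * g y := by
    rw [iUnion_inter, Set.encard_iUnion_eq_tsum fun i j hij =>
      (hSd hij).mono inter_subset_left inter_subset_left, ← ENNReal.tsum_mul_right]
    congr 1 with k
    rw [(hSinj k).encard_inter_preimage_singleton y]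
    by_cases hy : y ∈ f '' S k <;> simp [hy]
  calc ∫⁻ x in ⋃ k, S k, ENNReal.ofReal |(f' x).det| * g (f x) ∂μ
      = ∑' k, ∫⁻ x in S k, ENNReal.ofReal |(f' x).det| * g (f x) ∂μ :=
        lintegral_iUnion hSm hSd _
    _ = ∑' k, ∫⁻ y, (f '' S k).indicator g y ∂μ := by
      congr 1 with k
      rw [lintegral_indicator (measurable_image_of_fderivWithin (hSm k) (hSf' k) (hSinj k)),
        lintegral_image_eq_lintegral_abs_det_fderiv_mul μ (hSm k) (hSf' k) (hSinj k)]
    _ = ∫⁻ y, ∑' k, (f '' S k).indicator g y ∂μ := (lintegral_tsum fun k => (hg.indicator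
        (measurable_image_of_fderivWithin (hSm k) (hSf' k) (hSinj k))).aemeasurable).symm
    _ = ∫⁻ y, ((⋃ k, S k) ∩ f ⁻¹' {y}).encard * g y ∂μ := by simp_rw [hcount]

end AreaFormula

theorem HasStrictDerivAt.exists_mem_nhds_injOn {𝕜 : Type*} [NontriviallyNormedField 𝕜]
    [CompleteSpace 𝕜] {f : 𝕜 → 𝕜} {f' a : 𝕜} (hf : HasStrictDerivAt f f' a) (hf' : f' ≠ 0) :
    ∃ t ∈ 𝓝 a, InjOn f t :=
  ⟨_, hf.eventually_left_inverse hf', fun _ hx _ hy hxy =>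
    hx.symm.trans ((congrArg _ hxy).trans hy)⟩

theorem ContinuousLinearMap.det_restrictScalars_smulRight_one (c : ℂ) :
    ((smulRight (1 : ℂ →L[ℂ] ℂ) c).restrictScalars ℝ).det = ‖c‖ ^ 2 := by
  have h : ((smulRight (1 : ℂ →L[ℂ] ℂ) c).restrictScalars ℝ : ℂ →ₗ[ℝ] ℂ) =
      Algebra.lmul ℝ ℂ c := by
    ext z
    simp [mul_comm]
  rw [ContinuousLinearMap.det, h, ← Algebra.norm_apply, Algebra.norm_complex_apply,
    Complex.normSq_eq_norm_sq]

namespace Polynomial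

theorem finite_preimage_eval {R : Type*} [CommRing R] [IsDomain R] {p : R[X]}
    (hp : 0 < p.natDegree) {V : Set R} (hV : V.Finite) : ((fun x => p.eval x) ⁻¹' V).Finite := by
  refine hV.preimage' fun v _ => ?_
  have hpv : p - C v ≠ 0 := fun h => by simp [sub_eq_zero.1 h] at hp
  exact (finite_setOfPred_isRoot hpv).subset fun x hx => by simpa [sub_eq_zero] using hx

theorem encard_preimage_eval_singleton {K : Type*} [Field K] [IsAlgClosed K] (p : K[X]) {w : K}
    (hw : ∀ x, p.eval x = w → p.derivative.eval x ≠ 0) :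
    ((fun x => p.eval x) ⁻¹' {w}).encard = p.natDegree := by
  classical
  set r := p - C w
  have hr : r ≠ 0 := fun h => by
    rw [sub_eq_zero] at h
    exact hw 0 (by simp [h]) (by simp [h])
  have hfib : (fun x => p.eval x) ⁻¹' {w} = r.roots.toFinset := by
    ext x
    simp [r, mem_roots hr, sub_eq_zero]
  have hnodup : r.roots.Nodup := by
    refine Multiset.nodup_iff_count_le_one.2 fun x => ?_
    rw [count_roots]
    by_contra! h
    obtain ⟨hx, hx'⟩ := (one_lt_rootMultiplicity_iff_isRoot hr).1 h
    exact hw x (by simpa [r, sub_eq_zero] using hx) (by simpa [r] using hx')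
  rw [hfib, encard_coe_eq_coe_finsetCard, Multiset.toFinset_card_of_nodup hnodup,
    IsAlgClosed.card_roots_eq_natDegree, natDegree_sub_C]

end Polynomial

section Radial

variable {b : ℝ}

lemma hasDerivAt_neg_sq_div_sq_add_sq (hb : b ≠ 0) (r : ℝ) :
    HasDerivAt (fun r : ℝ => -b ^ 2 / (b ^ 2 + r ^ 2))
      (r * (2 * b ^ 2 / (b ^ 2 + r ^ 2) ^ 2)) r := by
  have hne : b ^ 2 + r ^ 2 ≠ 0 := by positivity
  have h := (hasDerivAt_const r (-b ^ 2)).div ((hasDerivAt_pow 2 r).const_add (b ^ 2)) hne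
  refine h.congr_deriv ?_
  push_cast
  ring

lemma tendsto_neg_sq_div_sq_add_sq_atTop (b : ℝ) :
    Tendsto (fun r : ℝ => -b ^ 2 / (b ^ 2 + r ^ 2)) atTop (𝓝 0) :=
  tendsto_const_nhds.div_atTop (tendsto_atTop_add_const_left _ _ (tendsto_pow_atTop two_ne_zero))

lemma integrableOn_Ioi_mul_sq_div_sq_add_sq_sq (hb : b ≠ 0) :
    IntegrableOn (fun r : ℝ => r * (2 * b ^ 2 / (b ^ 2 + r ^ 2) ^ 2)) (Ioi 0) :=
  integrableOn_Ioi_deriv_of_nonneg' (fun r _ => hasDerivAt_neg_sq_div_sq_add_sq hb r)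
    (fun r (hr : 0 < r) => by positivity) (tendsto_neg_sq_div_sq_add_sq_atTop b)

lemma integral_Ioi_mul_sq_div_sq_add_sq_sq (hb : b ≠ 0) :
    ∫ r in Ioi (0 : ℝ), r * (2 * b ^ 2 / (b ^ 2 + r ^ 2) ^ 2) = 1 := by
  rw [integral_Ioi_of_hasDerivAt_of_tendsto' (fun r _ => hasDerivAt_neg_sq_div_sq_add_sq hb r)
    (integrableOn_Ioi_mul_sq_div_sq_add_sq_sq hb) (tendsto_neg_sq_div_sq_add_sq_atTop b)]
  field_simp
  ring

end Radial

lemma Complex.lintegral_two_mul_sq_div_sq_add_norm_sq_sq {b : ℝ} (hb : b ≠ 0) :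
    ∫⁻ w : ℂ, ENNReal.ofReal (2 * b ^ 2 / (b ^ 2 + ‖w‖ ^ 2) ^ 2) =
      ENNReal.ofReal (2 * π) := by
  have hdim : Module.finrank ℝ ℂ - 1 = 1 := by simp
  have hint : Integrable (fun w : ℂ => 2 * b ^ 2 / (b ^ 2 + ‖w‖ ^ 2) ^ 2) := by
    rw [integrable_fun_norm_addHaar volume (f := fun r => 2 * b ^ 2 / (b ^ 2 + r ^ 2) ^ 2), hdim]
    simpa using integrableOn_Ioi_mul_sq_div_sq_add_sq_sq hb
  rw [← ofReal_integral_eq_lintegral_ofReal hint (.of_forall fun w => by positivity),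
    integral_fun_norm_addHaar volume (fun r => 2 * b ^ 2 / (b ^ 2 + r ^ 2) ^ 2), hdim]
  simp [integral_Ioi_mul_sq_div_sq_add_sq_sq hb, Measure.real]

theorem Polynomial.lintegral_norm_derivative_sq_mul_comp (p : ℂ[X]) {g : ℂ → ℝ≥0∞}
    (hg : Measurable g) :
    ∫⁻ u, ENNReal.ofReal (‖p.derivative.eval u‖ ^ 2) * g (p.eval u) =
      p.natDegree * ∫⁻ w, g w := by
  rcases Nat.eq_zero_or_pos p.natDegree with h | hp
  · simp [derivative_of_natDegree_zero h, h]
  have hp' : derivative p ≠ 0 := mt derivative_eq_zero.1 hp.ne'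
  set V := (fun x => p.eval x) '' {x | p.derivative.IsRoot x}
  have hV : V.Finite := (finite_setOfPred_isRoot hp').image _
  have hUc : ((fun x => p.eval x) ⁻¹' V).Finite := finite_preimage_eval hp hV
  set U := ((fun x => p.eval x) ⁻¹' V)ᶜ
  have hcrit : ∀ x ∈ U, p.derivative.eval x ≠ 0 := fun x hx h => hx ⟨x, h, rfl⟩
  have hfiber : ∀ y ∉ V, (U ∩ (fun x => p.eval x) ⁻¹' {y}).encard = p.natDegree := by
    intro y hy
    have hsub : (fun x => p.eval x) ⁻¹' {y} ⊆ U := fun x hx hxV =>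
      hy (mem_singleton_iff.1 hx ▸ hxV)
    rw [inter_eq_right.2 hsub, encard_preimage_eval_singleton p fun x hx h => hy ⟨x, h, hx⟩]
  calc ∫⁻ u, ENNReal.ofReal (‖p.derivative.eval u‖ ^ 2) * g (p.eval u)
      = ∫⁻ u in U, ENNReal.ofReal |((ContinuousLinearMap.smulRight (1 : ℂ →L[ℂ] ℂ)
          (p.derivative.eval u)).restrictScalars ℝ).det| * g (p.eval u) := by
        rw [Measure.restrict_eq_self_of_ae_mem (s := U) (compl_mem_ae_iff.2 (hUc.measure_zero _))]
        simp_rw [ContinuousLinearMap.det_restrictScalars_smulRight_one, abs_sq]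
    _ = ∫⁻ y, (U ∩ (fun x => p.eval x) ⁻¹' {y}).encard * g y :=
        lintegral_abs_det_fderiv_mul_eq_lintegral_encard_mul volume
          hUc.isClosed.isOpen_compl.measurableSet
          (fun x _ => ((p.hasDerivAt x).hasFDerivAt.restrictScalars ℝ).hasFDerivWithinAt)
          (fun x hx => (p.hasStrictDerivAt x).exists_mem_nhds_injOn (hcrit x hx)) hg
    _ = ∫⁻ y, p.natDegree * g y := by
        refine lintegral_congr_ae ?_
        filter_upwards [measure_eq_zero_iff_ae_notMem.1 (hV.measure_zero _)] with y hy
        simp only [hfiber y hy, ENat.toENNReal_coe]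
    _ = p.natDegree * ∫⁻ w, g w := lintegral_const_mul _ hg

theorem stmt12_general (p : Polynomial ℂ) (n : ℕ)
    (hdeg : p.natDegree = n) (b : ℝ) (hb : 0 < b) :
    ∫ u : ℂ,
        2 * b ^ 2 * ‖(Polynomial.derivative p).eval u‖ ^ 2 /
          (b ^ 2 + ‖p.eval u‖ ^ 2) ^ 2 ∂volume
      = 2 * π * n := by
  have hG : Measurable fun w : ℂ => ENNReal.ofReal (2 * b ^ 2 / (b ^ 2 + ‖w‖ ^ 2) ^ 2) := by
    fun_prop
  have hsplit : ∀ u : ℂ, ENNReal.ofReal (2 * b ^ 2 * ‖p.derivative.eval u‖ ^ 2 /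
      (b ^ 2 + ‖p.eval u‖ ^ 2) ^ 2) = ENNReal.ofReal (‖p.derivative.eval u‖ ^ 2) *
        ENNReal.ofReal (2 * b ^ 2 / (b ^ 2 + ‖p.eval u‖ ^ 2) ^ 2) := fun u => by
    rw [← ENNReal.ofReal_mul (sq_nonneg _)]
    ring_nf
  rw [integral_eq_lintegral_of_nonneg_ae (.of_forall fun u => by positivity)
    (by fun_prop : Measurable _).aestronglyMeasurable,
    lintegral_congr hsplit, p.lintegral_norm_derivative_sq_mul_comp hG,
    Complex.lintegral_two_mul_sq_div_sq_add_norm_sq_sq hb.ne', hdeg, ENNReal.toReal_mul,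
    ENNReal.toReal_ofReal (by positivity), ENNReal.toReal_natCast, mul_comm]

/-- for a polynomial `p : ℂ → ℂ` of degree `n ≥ 1` and `b > 0`,
`∫_ℂ 2b²|p'(u)|²/(b² + |p(u)|²)² dλ(u) = 2πn`,
where `λ` is Lebesgue measure on `ℂ`. -/
theorem stmt12 (p : Polynomial ℂ) (n : ℕ) (hn : 1 ≤ n)
    (hdeg : p.natDegree = n) (b : ℝ) (hb : 0 < b) :
    ∫ u : ℂ,
        2 * b ^ 2 * ‖(Polynomial.derivative p).eval u‖ ^ 2 /
          (b ^ 2 + ‖p.eval u‖ ^ 2) ^ 2 ∂volume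
      = 2 * π * n :=
  stmt12_general p n hdeg b hb
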